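/- Let A ∈ B(H₂, H₃) and B ∈ B(H₁, H₂) have closed ranges and suppose AB has closed range. Then (AB)† = B† A† if and only if A A* (B* A*)† B* B = A B. -/

import Mathlib

/-!
Write `D = (AB)†`. Since `D*` satisfies the Penrose equations of `(AB)* = B*A*`, uniqueness gives
`(B*A*)† = D*`. If `D = B†A†` the condition follows from `AA*A†* = A` and `B†*B*B = B`.
Conversely, taking adjoints turns the condition into `B*BDAA* = B*A*`; cancelling `B*` on the
left with `B†*` and `A*` on the right with `A†*` gives `BDA = BB†A†A`. Finally `D = B†B D A A†`,
because the range of `D` lies in that of `(AB)*`, hence of `B*`, and its kernel contains that of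
`(AB)*`, hence of `A*`; so `D = B†(BB†A†A)A† = B†A†`.
-/

open ContinuousLinearMap

/-- `X` is the Moore-Penrose inverse of `A`: the four Penrose equations. -/
def IsMPInv {H₁ H₂ : Type*} [NormedAddCommGroup H₁] [InnerProductSpace ℂ H₁]
    [NormedAddCommGroup H₂] [InnerProductSpace ℂ H₂] [CompleteSpace H₁] [CompleteSpace H₂]
    (A : H₁ →L[ℂ] H₂) (X : H₂ →L[ℂ] H₁) : Prop :=
  A ∘L X ∘L A = A ∧ X ∘L A ∘L X = X ∧
    ContinuousLinearMap.adjoint (A ∘L X) = A ∘L X ∧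
    ContinuousLinearMap.adjoint (X ∘L A) = X ∘L A

local postfix:max "ᴴ" => ContinuousLinearMap.adjoint

namespace IsMPInv

variable {E F : Type*} [NormedAddCommGroup E] [InnerProductSpace ℂ E] [CompleteSpace E]
  [NormedAddCommGroup F] [InnerProductSpace ℂ F] [CompleteSpace F]
  {T : E →L[ℂ] F} {S : F →L[ℂ] E}

theorem adjoint (h : IsMPInv T S) : IsMPInv Tᴴ Sᴴ := by
  obtain ⟨h₁, h₂, h₃, h₄⟩ := h
  refine ⟨?_, ?_, ?_, ?_⟩
  · rw [← comp_assoc, ← adjoint_comp, ← adjoint_comp, h₁]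
  · rw [← comp_assoc, ← adjoint_comp, ← adjoint_comp, h₂]
  · rw [← adjoint_comp, adjoint_adjoint, h₄]
  · rw [← adjoint_comp, adjoint_adjoint, h₃]

theorem self_mpInv_self (h : IsMPInv T S) (x : E) : T (S (T x)) = T x :=
  DFunLike.congr_fun h.1 x

theorem mpInv_self_mpInv (h : IsMPInv T S) (y : F) : S (T (S y)) = S y :=
  DFunLike.congr_fun h.2.1 y

theorem adjoint_mpInv_adjoint_self (h : IsMPInv T S) (y : F) : Sᴴ (Tᴴ y) = T (S y) :=
  DFunLike.congr_fun (show Sᴴ ∘L Tᴴ = T ∘L S by rw [← adjoint_comp, h.2.2.1]) y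

theorem adjoint_self_adjoint_mpInv (h : IsMPInv T S) (x : E) : Tᴴ (Sᴴ x) = S (T x) :=
  DFunLike.congr_fun (show Tᴴ ∘L Sᴴ = S ∘L T by rw [← adjoint_comp, h.2.2.2]) x

theorem adjoint_self_self_mpInv (h : IsMPInv T S) (y : F) : Tᴴ (T (S y)) = Tᴴ y :=
  DFunLike.congr_fun
    (show Tᴴ ∘L T ∘L S = Tᴴ by rw [← h.2.2.1, ← adjoint_comp, comp_assoc, h.1]) y

theorem mpInv_self_adjoint_self (h : IsMPInv T S) (y : F) : S (T (Tᴴ y)) = Tᴴ y :=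
  DFunLike.congr_fun
    (show S ∘L T ∘L Tᴴ = Tᴴ by rw [← comp_assoc, ← h.2.2.2, ← adjoint_comp, h.1]) y

theorem self_adjoint_self_adjoint_mpInv (h : IsMPInv T S) (x : E) : T (Tᴴ (Sᴴ x)) = T x :=
  DFunLike.congr_fun (show T ∘L Tᴴ ∘L Sᴴ = T by rw [← adjoint_comp, h.2.2.2, h.1]) x

theorem adjoint_mpInv_adjoint_self_self (h : IsMPInv T S) (x : E) : Sᴴ (Tᴴ (T x)) = T x :=
  DFunLike.congr_fun
    (show Sᴴ ∘L Tᴴ ∘L T = T by rw [← comp_assoc, ← adjoint_comp, h.2.2.1, comp_assoc, h.1]) x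

theorem adjoint_self_adjoint_mpInv_mpInv (h : IsMPInv T S) (y : F) : Tᴴ (Sᴴ (S y)) = S y :=
  DFunLike.congr_fun
    (show Tᴴ ∘L Sᴴ ∘L S = S by rw [← comp_assoc, ← adjoint_comp, h.2.2.2, comp_assoc, h.2.1]) y

theorem mpInv_adjoint_mpInv_adjoint_self (h : IsMPInv T S) (y : F) : S (Sᴴ (Tᴴ y)) = S y :=
  DFunLike.congr_fun (show S ∘L Sᴴ ∘L Tᴴ = S by rw [← adjoint_comp, h.2.2.1, h.2.1]) y

theorem unique {S' : F →L[ℂ] E} (h : IsMPInv T S) (h' : IsMPInv T S') : S = S' := by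
  have hTS : ∀ y, T (S y) = T (S' y) := fun y => by
    rw [← h.adjoint_mpInv_adjoint_self, ← h'.adjoint_self_self_mpInv,
      h.adjoint_mpInv_adjoint_self_self]
  have hST : ∀ x, S (T x) = S' (T x) := fun x => by
    rw [← h.adjoint_self_adjoint_mpInv, ← h'.mpInv_self_adjoint_self,
      h.self_adjoint_self_adjoint_mpInv]
  ext y
  rw [← h.mpInv_self_mpInv, hTS, hST, h'.mpInv_self_mpInv]

end IsMPInv

section Composition

variable {H₁ H₂ H₃ : Type*}
  [NormedAddCommGroup H₁] [InnerProductSpace ℂ H₁] [CompleteSpace H₁]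
  [NormedAddCommGroup H₂] [InnerProductSpace ℂ H₂] [CompleteSpace H₂]
  [NormedAddCommGroup H₃] [InnerProductSpace ℂ H₃] [CompleteSpace H₃]
  {A : H₂ →L[ℂ] H₃} {B : H₁ →L[ℂ] H₂} {Ad : H₃ →L[ℂ] H₂} {Bd : H₂ →L[ℂ] H₁}
  {ABd : H₃ →L[ℂ] H₁}

theorem IsMPInv.adjoint_comp_eq {X : H₁ →L[ℂ] H₃} (hAB : IsMPInv (A ∘L B) ABd)
    (hX : IsMPInv (Bᴴ ∘L Aᴴ) X) : X = ABdᴴ :=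
  hX.unique (by simpa only [adjoint_comp] using hAB.adjoint)

theorem IsMPInv.mpInv_self_mpInv_comp (hB : IsMPInv B Bd) (hAB : IsMPInv (A ∘L B) ABd)
    (y : H₃) : Bd (B (ABd y)) = ABd y := by
  have hrange := hAB.adjoint_self_adjoint_mpInv_mpInv y
  simp only [adjoint_comp, comp_apply] at hrange
  rw [← hrange, hB.mpInv_self_adjoint_self]

theorem IsMPInv.mpInv_comp_self_mpInv (hA : IsMPInv A Ad) (hAB : IsMPInv (A ∘L B) ABd)
    (y : H₃) : ABd (A (Ad y)) = ABd y := by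
  have hker := hAB.mpInv_adjoint_mpInv_adjoint_self
  simp only [adjoint_comp, comp_apply] at hker
  rw [← hker, hA.adjoint_self_self_mpInv, hker]

end Composition

theorem stmt18_general {H₁ H₂ H₃ : Type*}
    [NormedAddCommGroup H₁] [InnerProductSpace ℂ H₁] [CompleteSpace H₁]
    [NormedAddCommGroup H₂] [InnerProductSpace ℂ H₂] [CompleteSpace H₂]
    [NormedAddCommGroup H₃] [InnerProductSpace ℂ H₃] [CompleteSpace H₃]
    (A : H₂ →L[ℂ] H₃) (B : H₁ →L[ℂ] H₂)
    (Ad : H₃ →L[ℂ] H₂) (Bd : H₂ →L[ℂ] H₁) (ABd : H₃ →L[ℂ] H₁)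
    (hA : IsMPInv A Ad) (hB : IsMPInv B Bd) (hAB : IsMPInv (A ∘L B) ABd)
    (X : H₁ →L[ℂ] H₃) (hX : IsMPInv (ContinuousLinearMap.adjoint B ∘L ContinuousLinearMap.adjoint A) X) :
    ABd = Bd ∘L Ad ↔ A ∘L ContinuousLinearMap.adjoint A ∘L X ∘L ContinuousLinearMap.adjoint B ∘L B = A ∘L B := by
  rw [hAB.adjoint_comp_eq hX]
  constructor
  · rintro rfl
    ext x
    simp only [adjoint_comp, comp_apply]
    rw [hB.adjoint_mpInv_adjoint_self_self, hA.self_adjoint_self_adjoint_mpInv]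
  · intro hcond
    have hcond' : ∀ y, Bᴴ (B (ABd (A (Aᴴ y)))) = Bᴴ (Aᴴ y) := fun y => by
      simpa only [adjoint_comp, adjoint_adjoint, comp_apply] using
        DFunLike.congr_fun (congrArg ContinuousLinearMap.adjoint hcond) y
    have hkey : ∀ x, B (ABd (A x)) = B (Bd (Ad (A x))) := fun x =>
      calc B (ABd (A x)) = Bdᴴ (Bᴴ (B (ABd (A (Aᴴ (Adᴴ x)))))) := by
            rw [hB.adjoint_mpInv_adjoint_self_self, hA.self_adjoint_self_adjoint_mpInv]
        _ = Bdᴴ (Bᴴ (Aᴴ (Adᴴ x))) := by rw [hcond']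
        _ = B (Bd (Ad (A x))) := by
            rw [hA.adjoint_self_adjoint_mpInv, hB.adjoint_mpInv_adjoint_self]
    ext y
    rw [comp_apply, ← hA.mpInv_comp_self_mpInv hAB, ← hB.mpInv_self_mpInv_comp hAB, hkey,
      hA.mpInv_self_mpInv, hB.mpInv_self_mpInv]

theorem stmt18 {H₁ H₂ H₃ : Type*}
    [NormedAddCommGroup H₁] [InnerProductSpace ℂ H₁] [CompleteSpace H₁]
    [NormedAddCommGroup H₂] [InnerProductSpace ℂ H₂] [CompleteSpace H₂]
    [NormedAddCommGroup H₃] [InnerProductSpace ℂ H₃] [CompleteSpace H₃]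
    (A : H₂ →L[ℂ] H₃) (B : H₁ →L[ℂ] H₂)
    (Ad : H₃ →L[ℂ] H₂) (Bd : H₂ →L[ℂ] H₁) (ABd : H₃ →L[ℂ] H₁)
    (hAcl : IsClosed (LinearMap.range (A : H₂ →ₗ[ℂ] H₃) : Set H₃))
    (hBcl : IsClosed (LinearMap.range (B : H₁ →ₗ[ℂ] H₂) : Set H₂))
    (hABcl : IsClosed (LinearMap.range ((A ∘L B : H₁ →L[ℂ] H₃) : H₁ →ₗ[ℂ] H₃) : Set H₃))
    (hA : IsMPInv A Ad) (hB : IsMPInv B Bd) (hAB : IsMPInv (A ∘L B) ABd)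
    (X : H₁ →L[ℂ] H₃) (hX : IsMPInv (ContinuousLinearMap.adjoint B ∘L ContinuousLinearMap.adjoint A) X) :
    ABd = Bd ∘L Ad ↔ A ∘L ContinuousLinearMap.adjoint A ∘L X ∘L ContinuousLinearMap.adjoint B ∘L B = A ∘L B :=
  stmt18_general A B Ad Bd ABd hA hB hAB X hX
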